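/- arXiv:1910.13419 — 3 statements merged into one kernel-verified Lean document; each statement's English description precedes it below -/
import Mathlib

section
/- Let n ≥ 1 be an integer. Then for every α ∈ (0,1) one has μ_{n,α}/(1−α) ≤ π^{−n/2} √(3/2) · Γ(n/2+1)/Γ(3/2), and moreover lim_{α→1^-} μ_{n,α}/(1−α) = ω_n^{−1}. -/
open MeasureTheory Real Filter Topology Metric
open scoped ENNReal NNReal RealInnerProductSpace

noncomputable section

abbrev En (n : ℕ) : Type := EuclideanSpace ℝ (Fin n)

/-- The normalizing constant `μ_{n,s}`. -/
def mun (n : ℕ) (s : ℝ) : ℝ :=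
  (2 : ℝ) ^ s * Real.pi ^ (-(n : ℝ) / 2) *
    Real.Gamma (((n : ℝ) + s + 1) / 2) / Real.Gamma ((1 - s) / 2)

/-- The volume of the unit ball in `ℝ^n`. -/
def omegan (n : ℕ) : ℝ := Real.pi ^ ((n : ℝ) / 2) / Real.Gamma ((n : ℝ) / 2 + 1)

/-- The fractional `s`-divergence. -/
def fracDiv (n : ℕ) (s : ℝ) (φ : En n → En n) (x : En n) : ℝ :=
  mun n s * ∫ y : En n, ⟪y - x, φ y - φ x⟫ / ‖y - x‖ ^ ((n : ℝ) + s + 1)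

/-- The fractional `s`-gradient. -/
def fracGrad (n : ℕ) (s : ℝ) (f : En n → ℝ) (x : En n) : En n :=
  mun n s • ∫ y : En n, ((f y - f x) / ‖y - x‖ ^ ((n : ℝ) + s + 1)) • (y - x)

/-- The classical divergence. -/
def cdiv (n : ℕ) (φ : En n → En n) (x : En n) : ℝ :=
  ∑ i : Fin n, fderiv ℝ φ x (EuclideanSpace.single i 1) i

/-- The fractional `s`-variation of `f` on an open set `Ω`. -/
def fvar (n : ℕ) (s : ℝ) (f : En n → ℝ) (Ω : Set (En n)) : ℝ≥0∞ :=
  ⨆ φ : {φ : En n → En n //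
      ContDiff ℝ (⊤ : ℕ∞) φ ∧ HasCompactSupport φ ∧ tsupport φ ⊆ Ω ∧ ∀ x, ‖φ x‖ ≤ 1},
    ENNReal.ofReal (∫ x, f x * fracDiv n s φ.1 x)

/-- De Giorgi's variation of `f` on an open set `Ω`. -/
def cvar (n : ℕ) (f : En n → ℝ) (Ω : Set (En n)) : ℝ≥0∞ :=
  ⨆ φ : {φ : En n → En n //
      ContDiff ℝ (⊤ : ℕ∞) φ ∧ HasCompactSupport φ ∧ tsupport φ ⊆ Ω ∧ ∀ x, ‖φ x‖ ≤ 1},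
    ENNReal.ofReal (∫ x, f x * cdiv n φ.1 x)
/-!
Since `Γ((1-α)/2) = Γ((3-α)/2) / ((1-α)/2)`, the quotient `μ_{n,α}/(1-α)` equals
`2^{α-1} π^{-n/2} Γ((n+α+1)/2) / Γ((3-α)/2)`, which is continuous at `α = 1` with value
`π^{-n/2} Γ(n/2+1) = ω_n⁻¹`. The bound comes from Wendel's inequality `Γ(x+t) ≤ Γ(x) x^t`
(`0 < t < 1`), a consequence of the log-convexity of `Γ`, applied to the numerator at `x = n/2`
and to `Γ(3/2)` at `x = (3-α)/2`.
-/

namespace Real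

theorem Gamma_add_le_Gamma_mul_rpow {x t : ℝ} (hx : 0 < x) (ht₀ : 0 < t) (ht₁ : t < 1) :
    Gamma (x + t) ≤ Gamma x * x ^ t := by
  have hΓ : 0 < Gamma x := Gamma_pos_of_pos hx
  have h := Gamma_mul_add_mul_le_rpow_Gamma_mul_rpow_Gamma (s := x) (t := x + 1)
    hx (by linarith) (sub_pos.2 ht₁) ht₀ (sub_add_cancel 1 t)
  rw [show (1 - t) * x + t * (x + 1) = x + t by ring, Gamma_add_one hx.ne',
    mul_rpow hx.le hΓ.le] at h
  calc Gamma (x + t) ≤ Gamma x ^ (1 - t) * (x ^ t * Gamma x ^ t) := h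
    _ = Gamma x ^ (1 - t + t) * x ^ t := by rw [rpow_add hΓ]; ring
    _ = Gamma x * x ^ t := by rw [sub_add_cancel, rpow_one]

theorem continuousAt_Gamma_of_pos {x : ℝ} (hx : 0 < x) : ContinuousAt Gamma x :=
  differentiableOn_Gamma_Ioi.continuousOn.continuousAt (Ioi_mem_nhds hx)

end Real

theorem two_rpow_mul_Gamma_le {r α : ℝ} (hr : 1 ≤ r) (hα₀ : -1 < α) (hα₁ : α < 1) :
    2 ^ (α - 1) * Gamma ((r + α + 1) / 2) ≤ Gamma (r / 2 + 1) := by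
  have hr₂ : 0 < r / 2 := by linarith
  have hΓ : 0 < Gamma (r / 2) := Gamma_pos_of_pos hr₂
  have hWendel := Gamma_add_le_Gamma_mul_rpow hr₂ (t := (α + 1) / 2) (by linarith) (by linarith)
  have hpow : 2 ^ (α - 1) * (r / 2) ^ ((α + 1) / 2) ≤ r / 2 := by
    have h2 : (2 : ℝ) ^ (α - 1) = 2 ^ ((α - 1) / 2) * 2 ^ ((α - 1) / 2) := by
      rw [← rpow_add two_pos]; ring_nf
    have hsplit : (r / 2) ^ ((α + 1) / 2) = (r / 2) ^ ((α - 1) / 2) * (r / 2) := by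
      rw [← rpow_add_one hr₂.ne']; ring_nf
    calc 2 ^ (α - 1) * (r / 2) ^ ((α + 1) / 2)
        = (2 * 2 * (r / 2)) ^ ((α - 1) / 2) * (r / 2) := by
          rw [h2, hsplit, mul_rpow (by norm_num) hr₂.le, mul_rpow (by norm_num) (by norm_num)]
          ring
      _ ≤ 1 * (r / 2) := by
          gcongr
          exact rpow_le_one_of_one_le_of_nonpos (by linarith) (by linarith)
      _ = r / 2 := one_mul _
  calc 2 ^ (α - 1) * Gamma ((r + α + 1) / 2)
      = 2 ^ (α - 1) * Gamma (r / 2 + (α + 1) / 2) := by ring_nf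
    _ ≤ 2 ^ (α - 1) * (Gamma (r / 2) * (r / 2) ^ ((α + 1) / 2)) := by gcongr
    _ = (2 ^ (α - 1) * (r / 2) ^ ((α + 1) / 2)) * Gamma (r / 2) := by ring
    _ ≤ r / 2 * Gamma (r / 2) := by gcongr
    _ = Gamma (r / 2 + 1) := (Gamma_add_one hr₂.ne').symm

theorem Gamma_three_halves_le {α : ℝ} (hα₀ : 0 < α) (hα₁ : α < 1) :
    Gamma (3 / 2) ≤ √(3 / 2) * Gamma ((3 - α) / 2) := by
  have hx : 0 < (3 - α) / 2 := by linarith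
  have hWendel := Gamma_add_le_Gamma_mul_rpow hx (t := α / 2) (by linarith) (by linarith)
  have hpow : ((3 - α) / 2) ^ (α / 2) ≤ √(3 / 2) := calc
    ((3 - α) / 2) ^ (α / 2) ≤ (3 / 2) ^ (α / 2) := by gcongr; linarith
    _ ≤ (3 / 2) ^ (1 / 2 : ℝ) := rpow_le_rpow_of_exponent_le (by norm_num) (by linarith)
    _ = √(3 / 2) := (sqrt_eq_rpow _).symm
  calc Gamma (3 / 2) = Gamma ((3 - α) / 2 + α / 2) := by ring_nf
    _ ≤ Gamma ((3 - α) / 2) * ((3 - α) / 2) ^ (α / 2) := hWendel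
    _ ≤ Gamma ((3 - α) / 2) * √(3 / 2) := by gcongr
    _ = √(3 / 2) * Gamma ((3 - α) / 2) := mul_comm _ _

theorem mun_div_one_sub (n : ℕ) {α : ℝ} (hα : α ≠ 1) :
    mun n α / (1 - α) =
      2 ^ (α - 1) * π ^ (-(n : ℝ) / 2) * Gamma ((n + α + 1) / 2) / Gamma ((3 - α) / 2) := by
  have h1α : 1 - α ≠ 0 := sub_ne_zero.2 hα.symm
  have hΓ : Gamma ((3 - α) / 2) = (1 - α) / 2 * Gamma ((1 - α) / 2) := by
    rw [← Gamma_add_one (div_ne_zero h1α two_ne_zero),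
      show (1 - α) / 2 + 1 = (3 - α) / 2 by ring]
  rw [mun, hΓ, rpow_sub two_pos, rpow_one]
  field_simp

theorem mun_div_one_sub_le {n : ℕ} (hn : 1 ≤ n) {α : ℝ} (hα₀ : 0 < α) (hα₁ : α < 1) :
    mun n α / (1 - α) ≤
      π ^ (-(n : ℝ) / 2) * √(3 / 2) * (Gamma (n / 2 + 1) / Gamma (3 / 2)) := by
  have hΓ : 0 < Gamma ((3 - α) / 2) := Gamma_pos_of_pos (by linarith)
  rw [mun_div_one_sub n hα₁.ne, div_le_iff₀ hΓ]
  calc 2 ^ (α - 1) * π ^ (-(n : ℝ) / 2) * Gamma ((n + α + 1) / 2)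
      = π ^ (-(n : ℝ) / 2) * (2 ^ (α - 1) * Gamma ((n + α + 1) / 2)) := by ring
    _ ≤ π ^ (-(n : ℝ) / 2) * Gamma (n / 2 + 1) := by
        gcongr
        exact two_rpow_mul_Gamma_le (by exact_mod_cast hn) (by linarith) hα₁
    _ = π ^ (-(n : ℝ) / 2) * Gamma (n / 2 + 1) / Gamma (3 / 2) * Gamma (3 / 2) := by
        field_simp
    _ ≤ π ^ (-(n : ℝ) / 2) * Gamma (n / 2 + 1) / Gamma (3 / 2) *
          (√(3 / 2) * Gamma ((3 - α) / 2)) := by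
        gcongr
        exact Gamma_three_halves_le hα₀ hα₁
    _ = π ^ (-(n : ℝ) / 2) * √(3 / 2) * (Gamma (n / 2 + 1) / Gamma (3 / 2)) *
          Gamma ((3 - α) / 2) := by
        ring

theorem tendsto_mun_div_one_sub (n : ℕ) :
    Tendsto (fun α : ℝ => mun n α / (1 - α)) (𝓝[≠] 1) (𝓝 (omegan n)⁻¹) := by
  have hnum : ContinuousAt (fun α : ℝ => Gamma ((n + α + 1) / 2)) 1 :=
    (continuousAt_Gamma_of_pos (by positivity)).comp (by fun_prop)
  have hden : ContinuousAt (fun α : ℝ => Gamma ((3 - α) / 2)) 1 :=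
    (continuousAt_Gamma_of_pos (by norm_num)).comp (by fun_prop)
  have hcont : ContinuousAt (fun α : ℝ =>
      2 ^ (α - 1) * π ^ (-(n : ℝ) / 2) * Gamma ((n + α + 1) / 2) / Gamma ((3 - α) / 2)) 1 := by
    fun_prop (disch := norm_num)
  have hval : 2 ^ ((1 : ℝ) - 1) * π ^ (-(n : ℝ) / 2) * Gamma ((n + 1 + 1) / 2) /
      Gamma ((3 - 1) / 2) = (omegan n)⁻¹ := by
    rw [omegan, inv_div, neg_div, rpow_neg pi_pos.le,
      show ((n : ℝ) + 1 + 1) / 2 = n / 2 + 1 by ring]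
    norm_num [div_eq_inv_mul]
  rw [← hval]
  refine (hcont.tendsto.mono_left nhdsWithin_le_nhds).congr' ?_
  filter_upwards [self_mem_nhdsWithin] with α hα
  exact (mun_div_one_sub n hα).symm

/-- For every `α ∈ (0,1)` one has
`μ_{n,α}/(1−α) ≤ π^{−n/2} √(3/2) Γ(n/2+1)/Γ(3/2)`, and
`μ_{n,α}/(1−α) → ω_n⁻¹` as `α → 1⁻`. -/
theorem stmt0 (n : ℕ) (hn : 1 ≤ n) :
    (∀ α ∈ Set.Ioo (0 : ℝ) 1,
      mun n α / (1 - α) ≤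
        Real.pi ^ (-(n : ℝ) / 2) * Real.sqrt (3 / 2) *
          (Real.Gamma ((n : ℝ) / 2 + 1) / Real.Gamma (3 / 2))) ∧
    Tendsto (fun α : ℝ => mun n α / (1 - α)) (𝓝[<] (1 : ℝ)) (𝓝 (omegan n)⁻¹) :=
  ⟨fun _ hα => mun_div_one_sub_le hn hα.1 hα.2,
    (tendsto_mun_div_one_sub n).mono_left (nhdsLT_le_nhdsNE 1)⟩
end
end

section
/- Let n ≥ 1, α ∈ (0,1), and let φ : ℝ^n → ℝ^n be bounded and Lipschitz. Then for every x ∈ ℝ^n the integral div^α φ(x) := μ_{n,α} ∫_{ℝ^n} (y−x)·(φ(y)−φ(x))/|y−x|^{n+α+1} dy converges absolutely, and the resulting function satisfies ‖div^α φ‖_{L^∞(ℝ^n)} ≤ (2^{1−α} n ω_n μ_{n,α}/(α(1−α))) · Lip(φ)^α · ‖φ‖_{L^∞(ℝ^n;ℝ^n)}^{1−α}, where Lip(φ) denotes the Lipschitz constant of φ. -/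
/-! For `z = y - x`, Cauchy–Schwarz together with the Lipschitz and sup bounds gives
`|⟪z, φ y - φ x⟫| ≤ ‖z‖ · min (K‖z‖) (2M)`, so the integrand is dominated by the radial function
`min (K‖z‖) (2M) ‖z‖^{-(n+α)}`. In polar coordinates its integral is
`n ω_n ∫₀^∞ min (K t) (2M) t^{-1-α} dt`, which is finite since `α ∈ (0,1)`; splitting at
`t = 2M/K` it equals `n ω_n (2M)^{1-α} K^α / (α(1-α))`. -/

open MeasureTheory Real Filter Topology Metric
open scoped ENNReal NNReal RealInnerProductSpace

noncomputable section

open Set Module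

section RadialMajorant

variable {α K c : ℝ}

lemma min_mul_rpow_eqOn_Ioc (hK : 0 < K) :
    EqOn (fun t : ℝ => min (K * t) c * t ^ (-1 - α)) (fun t => K * t ^ (-α)) (Ioc 0 (c / K)) := by
  intro t ⟨ht, htr⟩
  have hKt : K * t ≤ c := by rwa [le_div_iff₀' hK] at htr
  dsimp only
  rw [min_eq_left hKt, show -α = 1 + (-1 - α) by ring, rpow_add ht, rpow_one, mul_assoc]

lemma min_mul_rpow_eqOn_Ioi (hK : 0 < K) :
    EqOn (fun t : ℝ => min (K * t) c * t ^ (-1 - α)) (fun t => c * t ^ (-1 - α))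
      (Ioi (c / K)) := by
  intro t ht
  have hKt : c ≤ K * t := by rw [mem_Ioi, div_lt_iff₀' hK] at ht; exact ht.le
  simp only [min_eq_right hKt]

lemma min_mul_rpow_eqOn_zero (hK : 0 ≤ K) (hc : 0 ≤ c) (hKc : K * c = 0) :
    EqOn (fun t : ℝ => min (K * t) c * t ^ (-1 - α)) 0 (Ioi 0) := by
  intro t ht
  rcases mul_eq_zero.1 hKc with rfl | rfl
  · simp [hc]
  · simp [mul_nonneg hK (le_of_lt ht)]

lemma integrableOn_Ioi_min_mul_rpow (hα : α ∈ Ioo 0 1) (hK : 0 ≤ K) (hc : 0 ≤ c) :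
    IntegrableOn (fun t : ℝ => min (K * t) c * t ^ (-1 - α)) (Ioi 0) := by
  rcases (mul_nonneg hK hc).eq_or_lt' with hKc | hKc
  · exact integrableOn_zero.congr_fun (min_mul_rpow_eqOn_zero hK hc hKc).symm measurableSet_Ioi
  have hK : 0 < K := lt_of_le_of_ne hK (by rintro rfl; simp at hKc)
  have hc : 0 < c := lt_of_le_of_ne hc (by rintro rfl; simp at hKc)
  have hr : 0 < c / K := by positivity
  rw [← Ioc_union_Ioi_eq_Ioi hr.le]
  refine IntegrableOn.union ?_ ?_
  · have := intervalIntegral.intervalIntegrable_rpow' (a := 0) (b := c / K) (r := -α)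
      (by linarith [hα.2])
    exact IntegrableOn.congr_fun
      (((intervalIntegrable_iff_integrableOn_Ioc_of_le hr.le).1 this).const_mul K)
      (min_mul_rpow_eqOn_Ioc hK).symm measurableSet_Ioc
  · exact IntegrableOn.congr_fun
      ((integrableOn_Ioi_rpow_of_lt (by linarith [hα.1] : -1 - α < -1) hr).const_mul c)
      (min_mul_rpow_eqOn_Ioi hK).symm measurableSet_Ioi

lemma integral_Ioi_min_mul_rpow (hα : α ∈ Ioo 0 1) (hK : 0 ≤ K) (hc : 0 ≤ c) :
    ∫ t in Ioi 0, min (K * t) c * t ^ (-1 - α) = c ^ (1 - α) * K ^ α / (α * (1 - α)) := by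
  obtain ⟨hα0, hα1⟩ := hα
  rcases (mul_nonneg hK hc).eq_or_lt' with hKc | hKc
  · rw [setIntegral_congr_fun measurableSet_Ioi (min_mul_rpow_eqOn_zero hK hc hKc)]
    rcases mul_eq_zero.1 hKc with rfl | rfl <;> simp [hα0.ne', (sub_pos.2 hα1).ne']
  have hK : 0 < K := lt_of_le_of_ne hK (by rintro rfl; simp at hKc)
  have hc : 0 < c := lt_of_le_of_ne hc (by rintro rfl; simp at hKc)
  have hr : 0 < c / K := by positivity
  have hsplit := integrableOn_Ioi_min_mul_rpow (α := α) ⟨hα0, hα1⟩ hK.le hc.le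
  rw [← Ioc_union_Ioi_eq_Ioi hr.le, setIntegral_union Ioc_disjoint_Ioi_same measurableSet_Ioi
      (hsplit.mono_set Ioc_subset_Ioi_self) (hsplit.mono_set (Ioi_subset_Ioi hr.le)),
    setIntegral_congr_fun measurableSet_Ioc (min_mul_rpow_eqOn_Ioc hK),
    setIntegral_congr_fun measurableSet_Ioi (min_mul_rpow_eqOn_Ioi hK),
    integral_const_mul, integral_const_mul, ← intervalIntegral.integral_of_le hr.le,
    integral_rpow (Or.inl (by linarith)), integral_Ioi_rpow_of_lt (by linarith) hr,
    zero_rpow (by linarith), div_rpow hc.le hK.le, div_rpow hc.le hK.le]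
  rw [show -α + 1 = 1 - α by ring, show -1 - α + 1 = -α by ring, rpow_sub hK, rpow_sub hc,
    rpow_neg hc.le, rpow_neg hK.le, rpow_one, rpow_one]
  field_simp
  ring

variable {E : Type*} [NormedAddCommGroup E] [NormedSpace ℝ E] [FiniteDimensional ℝ E]
  [MeasurableSpace E] [BorelSpace E] [Nontrivial E] (μ : Measure E) [μ.IsAddHaarMeasure]

lemma pow_smul_min_mul_rpow_eqOn {d : ℕ} (hd : 1 ≤ d) :
    EqOn (fun t : ℝ => t ^ (d - 1) • (min (K * t) c * t ^ (-((d : ℝ) + α))))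
      (fun t => min (K * t) c * t ^ (-1 - α)) (Ioi 0) := by
  intro t ht
  dsimp only
  rw [smul_eq_mul, ← rpow_natCast, Nat.cast_sub hd, Nat.cast_one, mul_left_comm,
    ← rpow_add ht]
  ring_nf

lemma integrable_min_mul_norm_rpow (hα : α ∈ Ioo 0 1) (hK : 0 ≤ K) (hc : 0 ≤ c) :
    Integrable (fun x : E => min (K * ‖x‖) c * ‖x‖ ^ (-((finrank ℝ E : ℝ) + α))) μ :=
  (integrable_fun_norm_addHaar μ).2 <| (integrableOn_Ioi_min_mul_rpow hα hK hc).congr_fun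
    (pow_smul_min_mul_rpow_eqOn finrank_pos).symm measurableSet_Ioi

lemma integral_min_mul_norm_rpow (hα : α ∈ Ioo 0 1) (hK : 0 ≤ K) (hc : 0 ≤ c) :
    ∫ x : E, min (K * ‖x‖) c * ‖x‖ ^ (-((finrank ℝ E : ℝ) + α)) ∂μ =
      finrank ℝ E * μ.real (ball 0 1) * (c ^ (1 - α) * K ^ α / (α * (1 - α))) := by
  rw [integral_fun_norm_addHaar μ (fun t => min (K * t) c * t ^ (-((finrank ℝ E : ℝ) + α))),
    setIntegral_congr_fun measurableSet_Ioi (pow_smul_min_mul_rpow_eqOn finrank_pos),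
    integral_Ioi_min_mul_rpow hα hK hc, nsmul_eq_mul, smul_eq_mul, mul_assoc]

end RadialMajorant

lemma div_rpow_add_one_eq_rpow_neg {t p : ℝ} (ht : 0 ≤ t) (hp : p ≠ 0) :
    t / t ^ (p + 1) = t ^ (-p) := by
  rcases ht.eq_or_lt with rfl | ht
  · rw [zero_div, zero_rpow (neg_ne_zero.2 hp)]
  rw [rpow_add ht, rpow_one, rpow_neg ht.le]
  field_simp

section FracDivIntegrand

variable {E : Type*} [NormedAddCommGroup E] [InnerProductSpace ℝ E]
  {φ : E → E} {K : ℝ≥0} {M : ℝ}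

lemma abs_inner_sub_le_mul_min (hK : LipschitzWith K φ) (hM : ∀ x, ‖φ x‖ ≤ M) (x y : E) :
    |⟪y - x, φ y - φ x⟫| ≤ ‖y - x‖ * min (K * ‖y - x‖) (2 * M) := by
  refine (abs_real_inner_le_norm _ _).trans (mul_le_mul_of_nonneg_left ?_ (norm_nonneg _))
  refine le_min (hK.norm_sub_le y x) ?_
  calc ‖φ y - φ x‖ ≤ ‖φ y‖ + ‖φ x‖ := norm_sub_le _ _
    _ ≤ 2 * M := by linarith [hM x, hM y]

lemma abs_inner_sub_div_rpow_le (hK : LipschitzWith K φ) (hM : ∀ x, ‖φ x‖ ≤ M) {p : ℝ}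
    (hp : p ≠ 0) (x y : E) :
    |⟪y - x, φ y - φ x⟫ / ‖y - x‖ ^ (p + 1)| ≤
      min (K * ‖y - x‖) (2 * M) * ‖y - x‖ ^ (-p) := by
  have hden : 0 ≤ ‖y - x‖ ^ (p + 1) := rpow_nonneg (norm_nonneg _) _
  calc |⟪y - x, φ y - φ x⟫ / ‖y - x‖ ^ (p + 1)|
      = |⟪y - x, φ y - φ x⟫| / ‖y - x‖ ^ (p + 1) := by rw [abs_div, abs_of_nonneg hden]
    _ ≤ ‖y - x‖ * min (K * ‖y - x‖) (2 * M) / ‖y - x‖ ^ (p + 1) :=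
      div_le_div_of_nonneg_right (abs_inner_sub_le_mul_min hK hM x y) hden
    _ = min (K * ‖y - x‖) (2 * M) * ‖y - x‖ ^ (-p) := by
      rw [mul_comm, mul_div_assoc, div_rpow_add_one_eq_rpow_neg (norm_nonneg _) hp]

variable [FiniteDimensional ℝ E] [MeasurableSpace E] [BorelSpace E] [Nontrivial E]
  (μ : Measure E) [μ.IsAddHaarMeasure] {α : ℝ}

theorem integrable_inner_sub_div_rpow (hα : α ∈ Ioo 0 1) (hK : LipschitzWith K φ)
    (hM : ∀ x, ‖φ x‖ ≤ M) (x : E) :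
    Integrable (fun y => ⟪y - x, φ y - φ x⟫ / ‖y - x‖ ^ ((finrank ℝ E : ℝ) + α + 1)) μ := by
  have hM0 : 0 ≤ 2 * M := by linarith [(norm_nonneg _).trans (hM x)]
  have hp : (finrank ℝ E : ℝ) + α ≠ 0 := by positivity [hα.1]
  have hφ := hK.continuous.measurable
  refine ((integrable_min_mul_norm_rpow μ hα K.2 hM0).comp_sub_right x).mono' ?_
    (ae_of_all _ (abs_inner_sub_div_rpow_le hK hM hp x))
  exact (Measurable.div (by fun_prop) (by fun_prop)).aestronglyMeasurable

theorem abs_integral_inner_sub_div_rpow_le (hα : α ∈ Ioo 0 1) (hK : LipschitzWith K φ)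
    (hM : ∀ x, ‖φ x‖ ≤ M) (x : E) :
    |∫ y, ⟪y - x, φ y - φ x⟫ / ‖y - x‖ ^ ((finrank ℝ E : ℝ) + α + 1) ∂μ| ≤
      finrank ℝ E * μ.real (ball 0 1) * ((2 * M) ^ (1 - α) * K ^ α / (α * (1 - α))) := by
  have hM0 : 0 ≤ 2 * M := by linarith [(norm_nonneg _).trans (hM x)]
  have hp : (finrank ℝ E : ℝ) + α ≠ 0 := by positivity [hα.1]
  have hmajorant := integrable_min_mul_norm_rpow μ hα K.2 hM0
  calc |∫ y, ⟪y - x, φ y - φ x⟫ / ‖y - x‖ ^ ((finrank ℝ E : ℝ) + α + 1) ∂μ|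
      ≤ ∫ y, |⟪y - x, φ y - φ x⟫ / ‖y - x‖ ^ ((finrank ℝ E : ℝ) + α + 1)| ∂μ :=
        abs_integral_le_integral_abs
    _ ≤ ∫ y, min (K * ‖y - x‖) (2 * M) * ‖y - x‖ ^ (-((finrank ℝ E : ℝ) + α)) ∂μ :=
        integral_mono (integrable_inner_sub_div_rpow μ hα hK hM x).abs
          (hmajorant.comp_sub_right x) (abs_inner_sub_div_rpow_le hK hM hp x)
    _ = _ := by
      rw [integral_sub_right_eq_self (fun z => min (K * ‖z‖) (2 * M) *
        ‖z‖ ^ (-((finrank ℝ E : ℝ) + α)))]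
      exact integral_min_mul_norm_rpow μ hα K.2 hM0

end FracDivIntegrand

lemma mun_nonneg (n : ℕ) {s : ℝ} (hs : s ∈ Ioo (-1) 1) : 0 ≤ mun n s := by
  have h₁ : 0 < Gamma (((n : ℝ) + s + 1) / 2) :=
    Gamma_pos_of_pos (by linarith [hs.1, n.cast_nonneg (α := ℝ)])
  have h₂ : 0 < Gamma ((1 - s) / 2) := Gamma_pos_of_pos (by linarith [hs.2])
  unfold mun
  positivity

lemma measureReal_ball_zero_one_eq_omegan {n : ℕ} (hn : 1 ≤ n) :
    volume.real (ball (0 : En n) 1) = omegan n := by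
  have : Nonempty (Fin n) := ⟨⟨0, hn⟩⟩
  have hΓ : 0 < Gamma ((n : ℝ) / 2 + 1) := Gamma_pos_of_pos (by positivity)
  rw [measureReal_def, EuclideanSpace.volume_ball, Fintype.card_fin, ENNReal.ofReal_one, one_pow,
    one_mul, ENNReal.toReal_ofReal (by positivity), omegan, sqrt_eq_rpow, ← rpow_natCast,
    ← rpow_mul pi_pos.le]
  ring_nf

/-- For a bounded Lipschitz field `φ : ℝ^n → ℝ^n`, the integral defining
`div^α φ (x)` converges absolutely at every point, and
`‖div^α φ‖_∞ ≤ (2^{1−α} n ω_n μ_{n,α}/(α(1−α))) Lip(φ)^α ‖φ‖_∞^{1−α}`.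
The Lipschitz constant and the sup-norm are quantified over all admissible bounds `K`, `M`. -/
theorem stmt1 (n : ℕ) (hn : 1 ≤ n) (α : ℝ) (hα : α ∈ Set.Ioo (0 : ℝ) 1)
    (φ : En n → En n) (K : ℝ≥0) (M : ℝ)
    (hK : LipschitzWith K φ) (hM : ∀ x, ‖φ x‖ ≤ M) :
    (∀ x : En n,
      Integrable (fun y : En n => ⟪y - x, φ y - φ x⟫ / ‖y - x‖ ^ ((n : ℝ) + α + 1))) ∧
    (∀ x : En n, |fracDiv n α φ x| ≤
      2 ^ (1 - α) * n * omegan n * mun n α / (α * (1 - α)) * (K : ℝ) ^ α * M ^ (1 - α)) := by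
  have : Nonempty (Fin n) := ⟨⟨0, hn⟩⟩
  have hint := integrable_inner_sub_div_rpow volume hα hK hM
  have hbound := abs_integral_inner_sub_div_rpow_le volume hα hK hM
  simp only [finrank_euclideanSpace_fin, measureReal_ball_zero_one_eq_omegan hn] at hint hbound
  refine ⟨hint, fun x => ?_⟩
  have hM0 : 0 ≤ M := (norm_nonneg _).trans (hM x)
  have hmun : 0 ≤ mun n α := mun_nonneg n ⟨by linarith [hα.1], hα.2⟩
  calc |fracDiv n α φ x|
      = mun n α * |∫ y, ⟪y - x, φ y - φ x⟫ / ‖y - x‖ ^ ((n : ℝ) + α + 1)| := by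
        rw [fracDiv, abs_mul, abs_of_nonneg hmun]
    _ ≤ mun n α * (n * omegan n * ((2 * M) ^ (1 - α) * K ^ α / (α * (1 - α)))) :=
        mul_le_mul_of_nonneg_left (hbound x) hmun
    _ = _ := by
      rw [mul_rpow zero_le_two hM0]
      ring
end
end

section
/- Let n ≥ 1, α ∈ (0,1) and f ∈ W^{α,1}(ℝ^n). Then ‖∇^α f‖_{L^1(ℝ^n;ℝ^n)} ≤ μ_{n,α} [f]_{W^{α,1}(ℝ^n)}, and equality holds if and only if f = 0 almost everywhere in ℝ^n. -/
open MeasureTheory Real Filter Topology Metric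
open scoped ENNReal NNReal RealInnerProductSpace

noncomputable section

/-!
By the triangle inequality for integrals,
`‖∇^α f(x)‖ ≤ μ_{n,α} ∫ |f(y) - f(x)| / |y - x|^{n+α} dy` for every `x`; integrating in `x`
gives the bound. If equality holds, then for a.e. `x` the integrand
`y ↦ (f(y) - f(x)) (y - x) / |y - x|^{n+α+1}` of `∇^α f(x)` has a.e. nonnegative inner product
with one vector `e ≠ 0`. Hence `f ≥ f(x)` a.e. on the half-space `{⟪y - x, e⟫ > 0}` and
`f ≤ f(x)` a.e. on the opposite one. Both half-spaces have infinite measure, so integrability of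
`f` forces `f(x) = 0`.
-/

theorem mun_pos {n : ℕ} {α : ℝ} (hα0 : 0 < α) (hα1 : α < 1) : 0 < mun n α := by
  unfold mun
  have hΓ : 0 < Real.Gamma ((1 - α) / 2) := Real.Gamma_pos_of_pos (by linarith)
  positivity

section HalfSpace

variable {E : Type*} [NormedAddCommGroup E] [InnerProductSpace ℝ E] [FiniteDimensional ℝ E]
  [MeasurableSpace E] [BorelSpace E] (μ : Measure E) [μ.IsAddHaarMeasure]

theorem measure_eq_top_of_preimage_two_smul_eq [Nontrivial E] {s : Set E}
    (hs : (fun y : E => (2 : ℝ) • y) ⁻¹' s = s) (hpos : 0 < μ s) : μ s = ∞ := by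
  have hscale := Measure.addHaar_preimage_smul μ (two_ne_zero (α := ℝ)) s
  rw [hs] at hscale
  by_contra hfin
  have hone := (ENNReal.mul_eq_right hpos.ne' hfin).mp hscale.symm
  have hlt : |((2 : ℝ) ^ Module.finrank ℝ E)⁻¹| < 1 := by
    rw [abs_of_pos (by positivity)]
    exact inv_lt_one_of_one_lt₀ (one_lt_pow₀ one_lt_two Module.finrank_pos.ne')
  rw [ENNReal.ofReal_eq_one] at hone
  exact hlt.ne hone

theorem measure_setOf_inner_sub_pos_eq_top [Nontrivial E] {v : E} (hv : v ≠ 0) (x : E) :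
    μ {y | 0 < ⟪y - x, v⟫} = ∞ := by
  have htrans : {y | 0 < ⟪y - x, v⟫} = (· + -x) ⁻¹' {z | 0 < ⟪z, v⟫} := by
    ext y; simp [sub_eq_add_neg]
  rw [htrans, measure_preimage_add_right]
  refine measure_eq_top_of_preimage_two_smul_eq μ ?_ ?_
  · ext y; simp [real_inner_smul_left]
  · refine (isOpen_lt continuous_const (continuous_id.inner continuous_const)).measure_pos μ
      ⟨v, ?_⟩
    exact real_inner_self_pos.2 hv

end HalfSpace

theorem nonpos_of_ae_le_of_measure_eq_top {X : Type*} [MeasurableSpace X] {μ : Measure X}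
    {f : X → ℝ} (hf : Integrable f μ) {s : Set X} (hs : μ s = ∞) {c : ℝ}
    (h : ∀ᵐ y ∂μ, y ∈ s → c ≤ f y) : c ≤ 0 := by
  by_contra! hc
  have hsub : s ≤ᵐ[μ] {y | c ≤ ‖f y‖} := by
    filter_upwards [h] with y hy hys
    exact (hy hys).trans (le_abs_self _)
  exact (measure_mono_ae hsub).not_gt (hs ▸ hf.measure_norm_ge_lt_top hc)

theorem eq_zero_of_ae_mul_inner_nonneg {E : Type*} [NormedAddCommGroup E]
    [InnerProductSpace ℝ E] [FiniteDimensional ℝ E] [MeasurableSpace E] [BorelSpace E]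
    [Nontrivial E] {μ : Measure E} [μ.IsAddHaarMeasure] {f : E → ℝ} (hf : Integrable f μ)
    {v : E} (hv : v ≠ 0) {x : E} {c : ℝ} (h : ∀ᵐ y ∂μ, 0 ≤ (f y - c) * ⟪y - x, v⟫) :
    c = 0 := by
  refine le_antisymm ?_ (neg_nonpos.1 ?_)
  · refine nonpos_of_ae_le_of_measure_eq_top hf (measure_setOf_inner_sub_pos_eq_top μ hv x) ?_
    filter_upwards [h] with y hy hpos
    exact sub_nonneg.1 (nonneg_of_mul_nonneg_left hy hpos)
  · refine nonpos_of_ae_le_of_measure_eq_top hf.neg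
      (measure_setOf_inner_sub_pos_eq_top μ (neg_ne_zero.2 hv) x) ?_
    filter_upwards [h] with y hy hpos
    rw [inner_neg_right, neg_pos] at hpos
    exact neg_le_neg (sub_nonpos.1 (nonpos_of_mul_nonneg_left hy hpos))

theorem exists_ne_zero_ae_inner_nonneg_of_norm_integral_eq {X : Type*} [MeasurableSpace X]
    {μ : Measure X} {E : Type*} [NormedAddCommGroup E] [InnerProductSpace ℝ E] [CompleteSpace E]
    [Nontrivial E] {G : X → E} (hG : Integrable G μ) (h : ‖∫ a, G a ∂μ‖ = ∫ a, ‖G a‖ ∂μ) :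
    ∃ e ≠ 0, ∀ᵐ a ∂μ, 0 ≤ ⟪e, G a⟫ := by
  set v := ∫ a, G a ∂μ
  by_cases hv : v = 0
  · obtain ⟨e, he⟩ := exists_ne (0 : E)
    refine ⟨e, he, ?_⟩
    have hG0 : (fun a => ‖G a‖) =ᵐ[μ] 0 := by
      rw [← integral_eq_zero_iff_of_nonneg (fun a => norm_nonneg _) hG.norm, ← h, hv, norm_zero]
    filter_upwards [hG0] with a ha
    simp [norm_eq_zero.1 ha]
  · refine ⟨v, hv, ?_⟩
    have hinner : Integrable (fun a => ⟪v, G a⟫) μ := hG.const_inner v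
    have hint : ∫ a, ⟪v, G a⟫ ∂μ = ∫ a, ‖v‖ * ‖G a‖ ∂μ := by
      rw [integral_inner hG, integral_const_mul, ← h, real_inner_self_eq_norm_mul_norm]
    have hae := (integral_eq_iff_of_ae_le hinner (hG.norm.const_mul _)
      (Eventually.of_forall fun a => real_inner_le_norm _ _)).1 hint
    filter_upwards [hae] with a ha
    rw [ha]
    positivity

theorem norm_div_rpow_add_one_smul {E : Type*} [NormedAddCommGroup E] [NormedSpace ℝ E]
    (a : ℝ) (z : E) {s : ℝ} (hs : s ≠ 0) :
    ‖(a / ‖z‖ ^ (s + 1)) • z‖ = |a| / ‖z‖ ^ s := by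
  rcases eq_or_ne z 0 with rfl | hz
  · simp [Real.zero_rpow hs]
  · have hr : 0 < ‖z‖ := norm_pos_iff.2 hz
    rw [norm_smul, Real.norm_eq_abs, abs_div, abs_of_pos (Real.rpow_pos_of_pos hr _),
      Real.rpow_add_one hr.ne']
    field_simp

theorem mul_inner_nonneg_of_inner_div_rpow_smul_nonneg {E : Type*} [NormedAddCommGroup E]
    [InnerProductSpace ℝ E] {a t : ℝ} {z e : E} (h : 0 ≤ ⟪e, (a / ‖z‖ ^ t) • z⟫) :
    0 ≤ a * ⟪z, e⟫ := by
  rcases eq_or_ne z 0 with rfl | hz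
  · simp
  · have hr : 0 < ‖z‖ ^ t := Real.rpow_pos_of_pos (norm_pos_iff.2 hz) t
    rw [real_inner_smul_right, real_inner_comm, div_mul_eq_mul_div] at h
    simpa [div_mul_cancel₀ _ hr.ne'] using mul_nonneg h hr.le

section FractionalGradient

variable {n : ℕ} {α : ℝ} {f : En n → ℝ}

def fracGradKernel (n : ℕ) (α : ℝ) (f : En n → ℝ) (x y : En n) : En n :=
  ((f y - f x) / ‖y - x‖ ^ ((n : ℝ) + α + 1)) • (y - x)

theorem fracGrad_eq_smul_integral (x : En n) :
    fracGrad n α f x = mun n α • ∫ y, fracGradKernel n α f x y := rfl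

theorem norm_fracGradKernel (hα : 0 < α) (x y : En n) :
    ‖fracGradKernel n α f x y‖ = |f x - f y| / ‖x - y‖ ^ ((n : ℝ) + α) := by
  rw [fracGradKernel, norm_div_rpow_add_one_smul _ _ (by positivity), abs_sub_comm,
    norm_sub_rev]

theorem integrable_fracGradKernel (hα : 0 < α) (hf : AEStronglyMeasurable f)
    (hsem : Integrable (fun p : En n × En n =>
      |f p.1 - f p.2| / ‖p.1 - p.2‖ ^ ((n : ℝ) + α))) :
    Integrable (fun p : En n × En n => fracGradKernel n α f p.1 p.2) := by
  refine hsem.mono' ?_ (Eventually.of_forall fun p => (norm_fracGradKernel hα p.1 p.2).le)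
  have hsub : Measurable fun p : En n × En n => p.2 - p.1 := measurable_snd.sub measurable_fst
  simp only [fracGradKernel, div_eq_mul_inv]
  exact ((hf.comp_snd.sub hf.comp_fst).mul
    (hsub.norm.pow_const _).inv.aestronglyMeasurable).smul hsub.aestronglyMeasurable

theorem norm_fracGrad_le (hα0 : 0 < α) (hα1 : α < 1) (x : En n) :
    ‖fracGrad n α f x‖ ≤ mun n α * ∫ y, |f x - f y| / ‖x - y‖ ^ ((n : ℝ) + α) := by
  rw [fracGrad_eq_smul_integral, norm_smul, Real.norm_of_nonneg (mun_pos hα0 hα1).le]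
  refine mul_le_mul_of_nonneg_left ?_ (mun_pos hα0 hα1).le
  simpa only [norm_fracGradKernel hα0] using
    norm_integral_le_integral_norm (fun y => fracGradKernel n α f x y)

theorem integrable_fracGrad (hα0 : 0 < α) (hα1 : α < 1)
    (hK : Integrable (fun p : En n × En n => fracGradKernel n α f p.1 p.2)) :
    Integrable (fracGrad n α f) := by
  have hdom : Integrable fun x => mun n α * ∫ y, ‖fracGradKernel n α f x y‖ :=
    hK.norm.integral_prod_left.const_mul _
  refine hdom.mono' (hK.aestronglyMeasurable.integral_prod_right'.const_smul (mun n α))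
    (Eventually.of_forall fun x => ?_)
  simpa only [norm_fracGradKernel hα0] using norm_fracGrad_le hα0 hα1 x

theorem integral_norm_fracGrad_le (hα0 : 0 < α) (hα1 : α < 1)
    (hK : Integrable (fun p : En n × En n => fracGradKernel n α f p.1 p.2))
    (hsem : Integrable (fun p : En n × En n =>
      |f p.1 - f p.2| / ‖p.1 - p.2‖ ^ ((n : ℝ) + α))) :
    ∫ x, ‖fracGrad n α f x‖ ≤
      mun n α * ∫ p : En n × En n, |f p.1 - f p.2| / ‖p.1 - p.2‖ ^ ((n : ℝ) + α) := by
  rw [Measure.volume_eq_prod, integral_prod _ hsem, ← integral_const_mul]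
  exact integral_mono (integrable_fracGrad hα0 hα1 hK).norm
    (hsem.integral_prod_left.const_mul _) (norm_fracGrad_le hα0 hα1)

theorem ae_norm_integral_fracGradKernel_eq (hα0 : 0 < α) (hα1 : α < 1)
    (hK : Integrable (fun p : En n × En n => fracGradKernel n α f p.1 p.2))
    (hsem : Integrable (fun p : En n × En n =>
      |f p.1 - f p.2| / ‖p.1 - p.2‖ ^ ((n : ℝ) + α)))
    (heq : ∫ x, ‖fracGrad n α f x‖ =
      mun n α * ∫ p : En n × En n, |f p.1 - f p.2| / ‖p.1 - p.2‖ ^ ((n : ℝ) + α)) :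
    ∀ᵐ x, ‖∫ y, fracGradKernel n α f x y‖ = ∫ y, ‖fracGradKernel n α f x y‖ := by
  have hae := (integral_eq_iff_of_ae_le (integrable_fracGrad hα0 hα1 hK).norm
    (hsem.integral_prod_left.const_mul _) (ae_of_all _ (norm_fracGrad_le hα0 hα1))).1
    (by rwa [integral_const_mul, ← integral_prod _ hsem, ← Measure.volume_eq_prod])
  filter_upwards [hae] with x hx
  rw [fracGrad_eq_smul_integral, norm_smul, Real.norm_of_nonneg (mun_pos hα0 hα1).le] at hx
  simpa only [norm_fracGradKernel hα0] using mul_left_cancel₀ (mun_pos hα0 hα1).ne' hx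

end FractionalGradient

/-- If `f ∈ W^{α,1}(ℝ^n)` then
`‖∇^α f‖_{L¹} ≤ μ_{n,α} [f]_{W^{α,1}}`, with equality iff `f = 0` a.e. -/
theorem stmt3 (n : ℕ) (hn : 1 ≤ n) (α : ℝ) (hα : α ∈ Set.Ioo (0 : ℝ) 1)
    (f : En n → ℝ) (hf : Integrable f)
    (hsem : Integrable (fun p : En n × En n =>
      |f p.1 - f p.2| / ‖p.1 - p.2‖ ^ ((n : ℝ) + α))) :
    (∫ x, ‖fracGrad n α f x‖) ≤
      mun n α * ∫ p : En n × En n, |f p.1 - f p.2| / ‖p.1 - p.2‖ ^ ((n : ℝ) + α) ∧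
    ((∫ x, ‖fracGrad n α f x‖) =
      mun n α * ∫ p : En n × En n, |f p.1 - f p.2| / ‖p.1 - p.2‖ ^ ((n : ℝ) + α) ↔
        f =ᵐ[volume] 0) := by
  obtain ⟨hα0, hα1⟩ := hα
  have hK := integrable_fracGradKernel hα0 hf.aestronglyMeasurable hsem
  have hle := integral_norm_fracGrad_le hα0 hα1 hK hsem
  refine ⟨hle, fun heq => ?_, fun hf0 => ?_⟩
  · have : NeZero n := ⟨by omega⟩
    filter_upwards [ae_norm_integral_fracGradKernel_eq hα0 hα1 hK hsem heq, hK.prod_right_ae]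
      with x hx hKx
    obtain ⟨e, he, hpos⟩ := exists_ne_zero_ae_inner_nonneg_of_norm_integral_eq hKx hx
    exact eq_zero_of_ae_mul_inner_nonneg hf he
      (hpos.mono fun y hy => mul_inner_nonneg_of_inner_div_rpow_smul_nonneg hy)
  · have hsem0 : (fun p : En n × En n => |f p.1 - f p.2| / ‖p.1 - p.2‖ ^ ((n : ℝ) + α))
        =ᵐ[volume] fun _ => 0 := by
      filter_upwards [Measure.quasiMeasurePreserving_fst.ae_eq_comp hf0,
        Measure.quasiMeasurePreserving_snd.ae_eq_comp hf0] with p h₁ h₂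
      simp_all
    rw [integral_congr_ae hsem0, integral_zero, mul_zero] at hle ⊢
    exact le_antisymm hle (integral_nonneg fun x => norm_nonneg _)
end
end
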